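/- Every decomposable (chordal) graph is a Generalized Bartlett graph. -/

import Mathlib

open SimpleGraph

variable {V : Type*}

/-- One step of the elimination/triangulation process: at step `k` (0-based) the vertex with
label `k` is eliminated, and all pairs of its neighbours with larger labels are joined. -/
def triStep {n : ℕ} (σ : V ≃ Fin n) (H : SimpleGraph V) (k : ℕ) : SimpleGraph V where
  Adj u v := H.Adj u v ∨
    (u ≠ v ∧ ∃ hk : k < n, k < (σ u : ℕ) ∧ k < (σ v : ℕ) ∧
      H.Adj u (σ.symm ⟨k, hk⟩) ∧ H.Adj v (σ.symm ⟨k, hk⟩))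
  symm := ⟨by
    rintro u v (h | ⟨hne, hk, h1, h2, h3, h4⟩)
    · exact Or.inl h.symm
    · exact Or.inr ⟨hne.symm, hk, h2, h1, h4, h3⟩⟩
  loopless := ⟨by
    rintro u (h | ⟨hne, _⟩)
    · exact H.irrefl h
    · exact hne rfl⟩

/-- The sequence of graphs `E_0, E_1, …` in the triangulation process. -/
def triSeq {n : ℕ} (σ : V ≃ Fin n) (G : SimpleGraph V) : ℕ → SimpleGraph V
  | 0 => G
  | k + 1 => triStep σ (triSeq σ G k) k

/-- The triangulation `D^σ(G)` of `G` under the ordering `σ` (`p − 2` elimination steps). -/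
def triangulation {n : ℕ} (σ : V ≃ Fin n) (G : SimpleGraph V) : SimpleGraph V :=
  triSeq σ G (n - 2)

/-- `σ` is a perfect elimination ordering of `G`: for every `j`, the vertex `σ⁻¹(j)` together
with its higher-labelled neighbours forms a clique. -/
def IsPerfectElimOrdering {n : ℕ} (σ : V ≃ Fin n) (G : SimpleGraph V) : Prop :=
  ∀ j : Fin n,
    G.IsClique ({σ.symm j} ∪ {v : V | (j : ℕ) < (σ v : ℕ) ∧ G.Adj v (σ.symm j)})

/-- A graph is decomposable (chordal) if it has no induced cycle of length `≥ 4`. -/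
def IsDecomposable (G : SimpleGraph V) : Prop :=
  ∀ n : ℕ, 4 ≤ n → IsEmpty (SimpleGraph.cycleGraph n ↪g G)

/-- `σ` is a Generalized Bartlett ordering of `G`: no triangle of `D^σ(G)` consists of three
non-edges of `G`. -/
def IsGBOrdering {n : ℕ} (σ : V ≃ Fin n) (G : SimpleGraph V) : Prop :=
  ¬ ∃ u v w : V,
      ¬ G.Adj u v ∧ ¬ G.Adj v w ∧ ¬ G.Adj u w ∧
      (triangulation σ G).Adj u v ∧ (triangulation σ G).Adj v w ∧
      (triangulation σ G).Adj u w

/-- `G` is a Generalized Bartlett graph: it admits a Generalized Bartlett ordering. -/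
def IsGB (G : SimpleGraph V) : Prop :=
  ∃ (n : ℕ) (σ : V ≃ Fin n), IsGBOrdering σ G

/-! A perfect elimination ordering creates no fill-in, so `D^σ(E) = E` and the ordering is
trivially Generalized Bartlett. Chordal graphs have perfect elimination orderings (Dirac): for
non-adjacent `u` and `w`, let `C` be the component of `u` in `G - N(w)`. Its outer boundary lies in
`N(w)` and is a clique, since a non-edge `x y` in it, closed up by a shortest `x`–`y` path through
`C` and by `w`, would be an induced cycle of length at least four. Induction on the smaller graphs
`G[C ∪ ∂C]` and `G[V \ C]` then gives a simplicial vertex outside any prescribed clique; deleting a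
simplicial vertex and recursing builds the ordering. -/

section PerfectElimination

variable {n : ℕ} {σ : V ≃ Fin n} {G : SimpleGraph V}

theorem IsPerfectElimOrdering.triStep_eq (h : IsPerfectElimOrdering σ G) (k : ℕ) :
    triStep σ G k = G := by
  ext u v
  refine ⟨?_, Or.inl⟩
  rintro (huv | ⟨hne, hk, hku, hkv, hu, hv⟩)
  · exact huv
  · exact h ⟨k, hk⟩ (.inr ⟨hku, hu⟩) (.inr ⟨hkv, hv⟩) hne

theorem IsPerfectElimOrdering.triSeq_eq (h : IsPerfectElimOrdering σ G) (k : ℕ) :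
    triSeq σ G k = G := by
  induction k with
  | zero => rfl
  | succ k ih => rw [triSeq, ih, h.triStep_eq]

theorem IsPerfectElimOrdering.triangulation_eq (h : IsPerfectElimOrdering σ G) :
    triangulation σ G = G :=
  h.triSeq_eq _

theorem IsPerfectElimOrdering.isGBOrdering (h : IsPerfectElimOrdering σ G) :
    IsGBOrdering σ G := by
  rintro ⟨u, v, w, huv, -, -, huv', -, -⟩
  rw [h.triangulation_eq] at huv'
  exact huv huv'

end PerfectElimination

namespace SimpleGraph

variable {G : SimpleGraph V}

theorem cycleGraph_adj_iff_val {N : ℕ} {u v : Fin N} (hN : 2 ≤ N) :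
    (cycleGraph N).Adj u v ↔ (u : ℕ) = v + 1 ∨ (v : ℕ) = u + 1 ∨
      ((u : ℕ) = 0 ∧ (v : ℕ) = N - 1) ∨ ((v : ℕ) = 0 ∧ (u : ℕ) = N - 1) := by
  have := u.isLt
  have := v.isLt
  rw [cycleGraph_adj']
  rcases lt_trichotomy u v with h | rfl | h
  · rw [Fin.coe_sub_iff_lt.mpr h, Fin.sub_val_of_le h.le]
    omega
  · rw [Fin.sub_val_of_le le_rfl]
    omega
  · rw [Fin.coe_sub_iff_lt.mpr h, Fin.sub_val_of_le h.le]
    omega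

theorem nonempty_cycleGraph_embedding_of_induced_path {m : ℕ} {f : ℕ → V} {b : V}
    (hf : Set.InjOn f (Set.Iic m)) (hb : ∀ i ≤ m, f i ≠ b)
    (hfadj : ∀ i ≤ m, ∀ j ≤ m, G.Adj (f i) (f j) ↔ i = j + 1 ∨ j = i + 1)
    (hbadj : ∀ i ≤ m, G.Adj b (f i) ↔ i = 0 ∨ i = m) :
    Nonempty (cycleGraph (m + 2) ↪g G) := by
  let F : Fin (m + 2) → V := Fin.cons b fun i : Fin (m + 1) => f i
  have hF : Function.Injective F := by
    refine Fin.cons_injective_iff.mpr ⟨?_, fun i j h => Fin.ext ?_⟩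
    · rintro ⟨i, hi⟩
      exact hb i (Nat.lt_succ_iff.mp i.isLt) hi
    · exact hf (Nat.lt_succ_iff.mp i.isLt) (Nat.lt_succ_iff.mp j.isLt) h
  refine ⟨⟨⟨F, hF⟩, fun {x y} => ?_⟩⟩
  change G.Adj (F x) (F y) ↔ _
  rw [cycleGraph_adj_iff_val (by omega)]
  induction x using Fin.cases <;> induction y using Fin.cases <;>
    simp only [F, Fin.cons_zero, Fin.cons_succ, Fin.val_zero, Fin.val_succ, true_and, false_iff,
      G.irrefl, G.adj_comm _ b, hbadj _ (Fin.is_le _), hfadj _ (Fin.is_le _) _ (Fin.is_le _)] <;>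
    omega

theorem Walk.adj_getVert_iff_of_length_eq_dist {u v : V} (p : G.Walk u v)
    (hp : p.length = G.dist u v) {i j : ℕ} (hi : i ≤ p.length) (hj : j ≤ p.length) :
    G.Adj (p.getVert i) (p.getVert j) ↔ i = j + 1 ∨ j = i + 1 := by
  refine ⟨fun h => ?_, ?_⟩
  · wlog hij : i < j generalizing i j
    · rcases (not_lt.mp hij).lt_or_eq with hji | rfl
      · exact (this hj hi h.symm hji).symm
      · exact absurd h (G.irrefl)
    by_contra hne
    have hshort := dist_le ((p.take i).append (cons h (p.drop j)))
    rw [length_append, length_cons, take_length, drop_length] at hshort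
    omega
  · rintro (rfl | rfl)
    · exact (p.adj_getVert_succ (by omega)).symm
    · exact p.adj_getVert_succ (by omega)

def IsSimplicial (G : SimpleGraph V) (v : V) : Prop :=
  G.IsClique (G.neighborSet v)

def outerBoundary (G : SimpleGraph V) (C : Set V) : Set V :=
  {x | x ∉ C ∧ ∃ c ∈ C, G.Adj c x}

theorem IsSimplicial.of_induce {T : Set V} {v : T} (hv : G.neighborSet v ⊆ T)
    (h : (G.induce T).IsSimplicial v) : G.IsSimplicial v :=
  fun x hx y hy hxy =>
    h (show (G.induce T).Adj v ⟨x, hv hx⟩ from hx) (show (G.induce T).Adj v ⟨y, hv hy⟩ from hy)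
      fun e => hxy (congrArg Subtype.val e)

theorem IsDecomposable.comap {V' : Type*} (hG : IsDecomposable G) (f : V' ↪ V) :
    IsDecomposable (G.comap f) :=
  fun n hn => ⟨fun e => (hG n hn).false ((Embedding.comap f G).comp e)⟩

theorem IsDecomposable.adj_of_reachable_induce (hG : IsDecomposable G) {s : Set V} {x y b : V}
    (hx : x ∈ s) (hy : y ∈ s) (hxy : x ≠ y) (hreach : (G.induce s).Reachable ⟨x, hx⟩ ⟨y, hy⟩)
    (hbs : b ∉ s) (hbx : G.Adj b x) (hby : G.Adj b y)
    (hb : ∀ c ∈ s, c ≠ x → c ≠ y → ¬ G.Adj b c) : G.Adj x y := by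
  by_contra hxy'
  obtain ⟨p, hp⟩ := hreach.exists_walk_length_eq_dist
  have hlen : 1 < p.length :=
    hp ▸ hreach.one_lt_dist_of_ne_of_not_adj (fun h => hxy (congrArg Subtype.val h)) hxy'
  set f : ℕ → V := fun i => (p.getVert i).val
  have hinj : Set.InjOn f (Set.Iic p.length) :=
    Subtype.val_injective.comp_injOn (p.isPath_of_length_eq_dist hp).getVert_injOn
  have hf0 : f 0 = x := by simp [f]
  have hfl : f p.length = y := by simp [f]
  have hinner : ∀ i, 0 < i → i < p.length → ¬ G.Adj b (f i) := by
    intro i hi0 hil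
    have hne : ∀ j ≤ p.length, j ≠ i → f i ≠ f j := fun j hj hji h =>
      hji (hinj (Set.mem_Iic.2 hil.le) (Set.mem_Iic.2 hj) h).symm
    exact hb _ (p.getVert i).prop (hf0 ▸ hne 0 (Nat.zero_le _) hi0.ne)
      (hfl ▸ hne _ le_rfl hil.ne')
  refine (hG (p.length + 2) (by omega)).false
    (nonempty_cycleGraph_embedding_of_induced_path (b := b) hinj ?_ ?_ ?_).some
  · exact fun i _ h => hbs (h ▸ (p.getVert i).prop)
  · exact fun i hi j hj => p.adj_getVert_iff_of_length_eq_dist hp hi hj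
  · intro i hi
    rcases Nat.eq_zero_or_pos i with rfl | hi0
    · simp [hf0, hbx]
    rcases hi.lt_or_eq with hil | rfl
    · simp only [hinner i hi0 hil, false_iff]
      omega
    · simp [hfl, hby]

theorem IsDecomposable.isClique_of_adj_of_preconnected (hG : IsDecomposable G) {C S : Set V}
    {b : V} (hC : (G.induce C).Preconnected) (hbC : b ∉ C) (hCb : ∀ u ∈ C, ¬ G.Adj b u)
    (hSb : ∀ x ∈ S, G.Adj b x) (hS : ∀ x ∈ S, ∃ u ∈ C, G.Adj u x) :
    G.IsClique S := by
  intro x hx y hy hxy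
  obtain ⟨u, hu, hux⟩ := hS x hx
  obtain ⟨w, hw, hwy⟩ := hS y hy
  set s : Set V := insert x (insert y C)
  have hCs : C ⊆ s := fun c hc => .inr (.inr hc)
  have hxs : x ∈ s := .inl rfl
  have hys : y ∈ s := .inr (.inl rfl)
  refine hG.adj_of_reachable_induce hxs hys hxy ?_ ?_ (hSb x hx) (hSb y hy) ?_
  · exact (Adj.reachable (show (G.induce s).Adj ⟨x, hxs⟩ ⟨u, hCs hu⟩ from hux.symm)).trans <|
      ((hC ⟨u, hu⟩ ⟨w, hw⟩).map (G.induceHomOfLE hCs).toHom).trans <|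
      Adj.reachable (show (G.induce s).Adj ⟨w, hCs hw⟩ ⟨y, hys⟩ from hwy)
  · rintro (h | h | h)
    · exact (hSb x hx).ne h
    · exact (hSb y hy).ne h
    · exact hbC h
  · rintro c (rfl | rfl | hc) hcx hcy
    · exact absurd rfl hcx
    · exact absurd rfl hcy
    · exact hCb c hc

theorem IsDecomposable.exists_isClique_outerBoundary (hG : IsDecomposable G) {u w : V}
    (huw : u ≠ w) (hadj : ¬ G.Adj u w) :
    ∃ C : Set V, u ∈ C ∧ w ∉ C ∧ (∀ c ∈ C, ¬ G.Adj c w) ∧ G.IsClique (G.outerBoundary C) := by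
  set C : Set V := {v | Relation.ReflTransGen (fun p q => G.Adj p q ∧ ¬ G.Adj w q) u v}
  have hCw : ∀ c ∈ C, ¬ G.Adj w c := by
    intro c hc
    rcases hc.cases_tail with rfl | ⟨_, -, -, hc⟩
    · exact fun h => hadj h.symm
    · exact hc
  have hwC : w ∉ C := by
    intro hw
    rcases hw.cases_tail with rfl | ⟨c, hc, hcw, -⟩
    · exact huw rfl
    · exact hCw c hc hcw.symm
  have hreach : ∀ c (hc : c ∈ C), (G.induce C).Reachable ⟨u, .refl⟩ ⟨c, hc⟩ := by
    intro c hc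
    induction hc with
    | refl => rfl
    | tail _ hcd ih => exact ih.trans (Adj.reachable (show (G.induce C).Adj _ _ from hcd.1))
  refine ⟨C, .refl, hwC, fun c hc h => hCw c hc h.symm, ?_⟩
  refine hG.isClique_of_adj_of_preconnected (b := w)
    (fun c d => (hreach c c.2).symm.trans (hreach d d.2)) hwC hCw
    (fun x ⟨hxC, c, hc, hcx⟩ => ?_) (fun x hx => hx.2)
  by_contra hwx
  exact hxC (Relation.ReflTransGen.tail hc ⟨hcx, hwx⟩)

theorem IsDecomposable.exists_isSimplicial_notMem [Finite V] (hG : IsDecomposable G)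
    {K : Set V} (hK : G.IsClique K) {a : V} (ha : a ∉ K) : ∃ v ∉ K, G.IsSimplicial v := by
  induction hn : Nat.card V using Nat.strong_induction_on generalizing V with
  | _ n ih =>
  by_cases hcomplete : ∀ x y : V, x ≠ y → G.Adj x y
  · exact ⟨a, ha, fun x _ y _ hxy => hcomplete x y hxy⟩
  push Not at hcomplete
  obtain ⟨u, w, huw, hnadj⟩ := hcomplete
  obtain ⟨C, huC, hwC, hCw, hS⟩ := hG.exists_isClique_outerBoundary huw hnadj
  set S := G.outerBoundary C
  have side : ∀ T : Set V, (∀ v ∈ T, v ∉ S → G.neighborSet v ⊆ T) →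
      ∀ p ∈ T, p ∉ S → ∀ q ∉ T, ∃ v ∈ T, v ∉ S ∧ G.IsSimplicial v := by
    intro T hT p hp hpS q hq
    obtain ⟨⟨v, hvT⟩, hvS, hv⟩ := ih _ (hn ▸ Finite.card_subtype_lt hq) (G := G.induce T)
      (hG.comap _) (K := {x : T | x.val ∈ S})
      (fun x hx y hy hxy => hS hx hy (Subtype.val_injective.ne hxy))
      (a := ⟨p, hp⟩) hpS rfl
    exact ⟨v, hvT, hvS, hv.of_induce (hT v hvT hvS)⟩
  have huS : u ∉ S := fun h => h.1 huC
  have hwS : w ∉ S := fun ⟨_, c, hc, hcw⟩ => hCw c hc hcw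
  -- There are no edges between `C` and `V \ (C ∪ S)`, so the clique `K` misses one of them.
  by_cases hKC : ∃ k ∈ K, k ∈ C
  · obtain ⟨k, hkK, hkC⟩ := hKC
    obtain ⟨v, hvC, hvS, hv⟩ := side Cᶜ
      (fun v hvC hvS x hvx hxC => hvS ⟨hvC, x, hxC, hvx.symm⟩) w hwC hwS u (not_not.mpr huC)
    refine ⟨v, fun hvK => hvS ⟨hvC, k, hkC, hK hkK hvK ?_⟩, hv⟩
    rintro rfl
    exact hvC hkC
  · obtain ⟨v, hvCS, hvS, hv⟩ := side (C ∪ S)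
      (fun v hv hvS x hvx => (em (x ∈ C)).imp id fun hxC => ⟨hxC, v, hv.resolve_right hvS, hvx⟩)
      u (.inl huC) huS w (fun h => h.elim hwC hwS)
    exact ⟨v, fun hvK => hKC ⟨v, hvK, hvCS.resolve_right hvS⟩, hv⟩

theorem IsSimplicial.exists_isPerfectElimOrdering_cons {v : V} (hv : G.IsSimplicial v) {k : ℕ}
    {σ : {u // u ≠ v} ≃ Fin k}
    (hσ : IsPerfectElimOrdering σ (G.comap (Function.Embedding.subtype (· ≠ v)))) :
    ∃ τ : V ≃ Fin (k + 1), IsPerfectElimOrdering τ G := by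
  classical
  let τ := ((Equiv.optionSubtypeNe v).symm.trans σ.optionCongr).trans (finSuccEquiv k).symm
  refine ⟨τ, ?_⟩
  have hτ : ∀ u (hu : u ≠ v), τ u = (σ ⟨u, hu⟩).succ := fun u hu => by
    simp [τ, Equiv.optionSubtypeNe_symm_of_ne hu]
  have hτv : τ v = 0 := by simp [τ]
  intro j
  induction j using Fin.cases with
  | zero =>
    rw [τ.symm_apply_eq.mpr hτv.symm]
    refine (isClique_insert.mpr ⟨hv, fun u hu _ => hu⟩).subset ?_
    rintro u (rfl | ⟨-, hu⟩)
    · exact .inl rfl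
    · exact .inr hu.symm
  | succ i =>
    have hτi : τ.symm i.succ = σ.symm i := τ.symm_apply_eq.mpr (by simp [hτ _ (σ.symm i).prop])
    rw [hτi]
    refine ((hσ i).map (f := Function.Embedding.subtype _)).mono (map_comap_le _ _) |>.subset ?_
    rintro u (rfl | ⟨hiu, hu⟩)
    · exact ⟨σ.symm i, .inl rfl, rfl⟩
    · have huv : u ≠ v := by
        rintro rfl
        simp [hτv] at hiu
      refine ⟨⟨u, huv⟩, .inr ⟨?_, hu⟩, rfl⟩
      rw [hτ u huv, Fin.val_succ, Fin.val_succ] at hiu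
      omega

theorem IsDecomposable.exists_isPerfectElimOrdering [Finite V] (hG : IsDecomposable G) :
    ∃ (n : ℕ) (σ : V ≃ Fin n), IsPerfectElimOrdering σ G := by
  induction hn : Nat.card V using Nat.strong_induction_on generalizing V with
  | _ n ih =>
  cases isEmpty_or_nonempty V with
  | inl _ => exact ⟨0, Equiv.equivOfIsEmpty V (Fin 0), fun j => j.elim0⟩
  | inr hV =>
    obtain ⟨v, -, hv⟩ := hG.exists_isSimplicial_notMem (K := ∅) (by simp)
      (a := hV.some) (Set.notMem_empty _)
    obtain ⟨k, σ, hσ⟩ := ih _ (hn ▸ Finite.card_subtype_lt (not_not.mpr rfl))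
      (G := G.comap (Function.Embedding.subtype (· ≠ v))) (hG.comap _) rfl
    exact ⟨k + 1, hv.exists_isPerfectElimOrdering_cons hσ⟩

end SimpleGraph

/-- every decomposable (chordal) graph is a Generalized Bartlett graph. -/
theorem isGB_of_isDecomposable [Fintype V] (G : SimpleGraph V)
    (hdec : IsDecomposable G) : IsGB G := by
  obtain ⟨n, σ, hσ⟩ := hdec.exists_isPerfectElimOrdering
  exact ⟨n, σ, hσ.isGBOrdering⟩
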